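/- arXiv:1506.06069 — 2 statements merged into one kernel-verified Lean document; each statement's English description precedes it below -/
import Mathlib

section
/- For i ∈ {1,2}, let Z_i be a subgroup of S_h × S_n, R_i a subgroup of Ω, and U_i = Z_i × R_i ≤ G. Then a social choice correspondence is both U_1-consistent and U_2-consistent if and only if it is ⟨U_1, U_2⟩-consistent, where ⟨U_1, U_2⟩ is the subgroup of G generated by U_1 ∪ U_2. In particular, a resolute scc is both U_1-consistent and U_2-consistent if and only if it is ⟨U_1, U_2⟩-consistent. -/
/-!
Common framework: preferences on `n ≥ 2` alternatives (`Fin n`) expressed by `h ≥ 2`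
individuals (`Fin h`).  Following the paper, a linear order `q ∈ L(N)` is identified with
the permutation of `Fin n` sending each rank position (`0` = best) to the alternative
occupying that position.
-/

/-- A preference relation (a linear order on the set `Fin n` of alternatives), identified
with the permutation sending each rank position (`0` = best) to the alternative at
that position. -/
abbrev Pref (n : ℕ) := Equiv.Perm (Fin n)

/-- `x ⪰_q y` : alternative `x` is weakly preferred to `y` in `q`. -/
def prefGE {n : ℕ} (q : Pref n) (x y : Fin n) : Prop := q.symm x ≤ q.symm y

/-- `x ≻_q y` : alternative `x` is strictly preferred to `y` in `q`. -/
def prefGT {n : ℕ} (q : Pref n) (x y : Fin n) : Prop := q.symm x < q.symm y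

instance {n : ℕ} (q : Pref n) (x y : Fin n) : Decidable (prefGT q x y) :=
  inferInstanceAs (Decidable (q.symm x < q.symm y))

/-- A preference profile: one preference relation for each individual. -/
abbrev Profile (n h : ℕ) := Fin h → Pref n

/-- A social choice correspondence (the nonemptiness of its values is `IsSCC`). -/
abbrev SCC (n h : ℕ) := Profile n h → Set (Fin n)

/-- `C` has nonempty values, i.e. `C` really is a social choice correspondence. -/
def IsSCC {n h : ℕ} (C : SCC n h) : Prop := ∀ p, (C p).Nonempty

/-- `C` is resolute: it always selects exactly one alternative. -/
def Resolute {n h : ℕ} (C : SCC n h) : Prop := ∀ p, ∃ x, C p = {x}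

/-- `C'` is a refinement of `C`. -/
def Refines {n h : ℕ} (C' C : SCC n h) : Prop := ∀ p, C' p ⊆ C p

/-- The order-reversing permutation `ρ₀ : r ↦ n - r + 1`. -/
def rho0 (n : ℕ) : Equiv.Perm (Fin n) := Fin.revPerm

/-- The profile `p^{(id,id,ρ₀)}` obtained from `p` by reversing every individual
preference. -/
def revProfile {n h : ℕ} (p : Profile n h) : Profile n h := fun i => p i * rho0 n

/-- `C` is immune to the reversal bias. -/
def Immune {n h : ℕ} (C : SCC n h) : Prop :=
  ∀ (p : Profile n h) (x : Fin n), C p = {x} → C (revProfile p) ≠ C p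

/-- `Y` is a partition: nonempty, pairwise disjoint, covering blocks. -/
def IsPartition {α : Type*} {s : ℕ} (Y : Fin s → Finset α) : Prop :=
  (∀ j, (Y j).Nonempty) ∧ (∀ j k, j ≠ k → Disjoint (Y j) (Y k)) ∧ (∀ a, ∃ j, a ∈ Y j)

/-- The ambient group `S_h × S_n × S_n` (the third component is meant to range in `Ω`). -/
abbrev Amb (n h : ℕ) := Equiv.Perm (Fin h) × Equiv.Perm (Fin n) × Equiv.Perm (Fin n)

/-- The action `p ↦ p^g` of `g = (φ,ψ,ρ)` on profiles. -/
def gact {n h : ℕ} (g : Amb n h) (p : Profile n h) : Profile n h :=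
  fun i => g.2.1 * p (g.1⁻¹ i) * g.2.2

/-- The group `Ω = {id, ρ₀}`. -/
def OmegaGrp (n : ℕ) : Subgroup (Equiv.Perm (Fin n)) := Subgroup.zpowers (rho0 n)

/-- The group `G = S_h × S_n × Ω`. -/
def bigG (n h : ℕ) : Subgroup (Amb n h) :=
  (⊤ : Subgroup (Equiv.Perm (Fin h))).prod
    ((⊤ : Subgroup (Equiv.Perm (Fin n))).prod (OmegaGrp n))

/-- `U`-consistency of a social choice correspondence `C`: for every `p` and every
`(φ,ψ,ρ) ∈ U`, if `ρ = id` then `C(p^{(φ,ψ,id)}) = ψ C(p)`, and if `ρ = ρ₀` and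
`|C(p)| = 1` then `C(p^{(φ,ψ,ρ₀)}) ≠ ψ C(p)`. -/
def UConsistent {n h : ℕ} (U : Subgroup (Amb n h)) (C : SCC n h) : Prop :=
  ∀ (p : Profile n h), ∀ g ∈ U,
    (g.2.2 = 1 → C (gact g p) = g.2.1 '' C p) ∧
    (g.2.2 = rho0 n → ∀ x : Fin n, C p = {x} → C (gact g p) ≠ g.2.1 '' C p)

/-- A subgroup `U` of `G` is regular: for every profile `p` there is `ψ⋆ ∈ S_n`
conjugate to `ρ₀` with `Stab_U(p) ⊆ (S_h × {id} × {id}) ∪ (S_h × {ψ⋆} × {ρ₀})`. -/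
def RegularSubgroup {n h : ℕ} (U : Subgroup (Amb n h)) : Prop :=
  ∀ p : Profile n h, ∃ ψs : Equiv.Perm (Fin n), IsConj (rho0 n) ψs ∧
    ∀ g ∈ U, gact g p = p →
      (g.2.1 = 1 ∧ g.2.2 = 1) ∨ (g.2.1 = ψs ∧ g.2.2 = rho0 n)

/-- The subgroup `Z × R` of `G`, for `Z ≤ S_h × S_n` and `R ≤ Ω`. -/
def prodSubgroup {n h : ℕ}
    (Z : Subgroup (Equiv.Perm (Fin h) × Equiv.Perm (Fin n)))
    (R : Subgroup (Equiv.Perm (Fin n))) : Subgroup (Amb n h) :=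
  (Z.prod R).map
    (MulEquiv.prodAssoc :
      (Equiv.Perm (Fin h) × Equiv.Perm (Fin n)) × Equiv.Perm (Fin n) ≃* Amb n h).toMonoidHom

/-!
Every element of `⟨U₁, U₂⟩` lies in `(Z₁ ⊔ Z₂) × (R₁ ⊔ R₂)`. The identity
`C(p^{(φ,ψ,id)}) = ψ C(p)` survives products and inverses, so it holds on `Z₁ ⊔ Z₂` once it holds
on `Z₁` and on `Z₂`. The reversal condition is not closed under products, but it does not need to
be: subgroups of `Ω = {id, ρ₀}` are `⊥` or `Ω`, so `ρ₀ ∈ R₁ ⊔ R₂` forces `ρ₀ ∈ R₁` or `ρ₀ ∈ R₂`,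
and writing `(φ, ψ, ρ₀) = (φ, ψ, id) (id, id, ρ₀)` transports the reversal condition of
`(id, id, ρ₀)` along the equivariance of `(φ, ψ)`.
-/

namespace Subgroup

theorem eq_one_or_eq_of_mem_zpowers {G : Type*} [Group G] {a r : G} (ha : a ^ 2 = 1)
    (hr : r ∈ zpowers a) : r = 1 ∨ r = a := by
  obtain ⟨k, rfl⟩ := mem_zpowers_iff.mp hr
  rw [zpow_eq_zpow_emod' k ha]
  rcases Int.emod_two_eq_zero_or_one k with hk | hk <;> simp [hk]

theorem mem_or_mem_of_mem_sup_of_le_zpowers {G : Type*} [Group G] {a : G} (ha : a ^ 2 = 1)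
    {H K : Subgroup G} (hH : H ≤ zpowers a) (hK : K ≤ zpowers a) (haHK : a ∈ H ⊔ K) : a ∈ H ∨ a ∈ K := by
  by_contra! hnot
  have eq_bot {L : Subgroup G} (hL : L ≤ zpowers a) (haL : a ∉ L) : L = ⊥ :=
    (eq_bot_iff_forall L).mpr fun r hr =>
      (eq_one_or_eq_of_mem_zpowers ha (hL hr)).resolve_right fun hra => haL (hra ▸ hr)
  rw [eq_bot hH hnot.1, eq_bot hK hnot.2, sup_bot_eq, mem_bot] at haHK
  exact hnot.1 (haHK ▸ one_mem H)

end Subgroup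

theorem rho0_sq (n : ℕ) : rho0 n ^ 2 = 1 := by
  ext x
  simp [rho0, sq]

section Consistency

variable {n h : ℕ}

@[simp]
theorem gact_one (p : Profile n h) : gact (1, 1, 1) p = p := by
  funext i
  simp [gact]

theorem gact_mul_of_commute {g g' : Amb n h} (hc : Commute g.2.2 g'.2.2) (p : Profile n h) :
    gact (g * g') p = gact g (gact g' p) := by
  funext i
  simp only [gact, Prod.fst_mul, Prod.snd_mul, mul_inv_rev, Equiv.Perm.mul_apply, hc.eq,
    mul_assoc]

theorem gact_eq_gact_gact (g : Amb n h) (p : Profile n h) :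
    gact g p = gact (g.1, g.2.1, 1) (gact (1, 1, g.2.2) p) := by
  rw [← gact_mul_of_commute (Commute.one_left _)]
  simp

theorem mem_prodSubgroup {Z : Subgroup (Equiv.Perm (Fin h) × Equiv.Perm (Fin n))}
    {R : Subgroup (Equiv.Perm (Fin n))} {g : Amb n h} :
    g ∈ prodSubgroup Z R ↔ (g.1, g.2.1) ∈ Z ∧ g.2.2 ∈ R := by
  constructor
  · rintro ⟨_, ⟨hZ, hR⟩, rfl⟩
    exact ⟨hZ, hR⟩
  · rintro ⟨hZ, hR⟩
    exact ⟨((g.1, g.2.1), g.2.2), ⟨hZ, hR⟩, rfl⟩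

theorem prodSubgroup_mono {Z Z' : Subgroup (Equiv.Perm (Fin h) × Equiv.Perm (Fin n))}
    {R R' : Subgroup (Equiv.Perm (Fin n))} (hZ : Z ≤ Z') (hR : R ≤ R') :
    prodSubgroup Z R ≤ prodSubgroup Z' R' := fun _ hg =>
  mem_prodSubgroup.mpr ((mem_prodSubgroup.mp hg).imp (hZ ·) (hR ·))

theorem sup_prodSubgroup_le (Z₁ Z₂ : Subgroup (Equiv.Perm (Fin h) × Equiv.Perm (Fin n)))
    (R₁ R₂ : Subgroup (Equiv.Perm (Fin n))) :
    prodSubgroup Z₁ R₁ ⊔ prodSubgroup Z₂ R₂ ≤ prodSubgroup (Z₁ ⊔ Z₂) (R₁ ⊔ R₂) :=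
  sup_le (prodSubgroup_mono le_sup_left le_sup_left)
    (prodSubgroup_mono le_sup_right le_sup_right)

theorem UConsistent.mono {U V : Subgroup (Amb n h)} {C : SCC n h} (hUV : U ≤ V)
    (hV : UConsistent V C) : UConsistent U C :=
  fun p g hg => hV p g (hUV hg)

def equivarianceSubgroup (C : SCC n h) :
    Subgroup (Equiv.Perm (Fin h) × Equiv.Perm (Fin n)) where
  carrier := {z | ∀ p, C (gact (z.1, z.2, 1) p) = z.2 '' C p}
  one_mem' p := by simp
  mul_mem' {z w} hz hw p := by
    have hzw :
        gact ((z * w).1, (z * w).2, 1) p = gact (z.1, z.2, 1) (gact (w.1, w.2, 1) p) := by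
      rw [← gact_mul_of_commute (Commute.one_left _)]
      rfl
    rw [hzw, hz, hw, Set.image_image]
    rfl
  inv_mem' {z} hz p := by
    have hcancel : gact (z.1, z.2, 1) (gact (z⁻¹.1, z⁻¹.2, 1) p) = p := by
      rw [← gact_mul_of_commute (Commute.one_left _)]
      simp
    have := hz (gact (z⁻¹.1, z⁻¹.2, 1) p)
    rw [hcancel] at this
    rw [this, Prod.snd_inv, Equiv.Perm.coe_inv, Equiv.symm_image_image]

theorem UConsistent.le_equivarianceSubgroup
    {Z : Subgroup (Equiv.Perm (Fin h) × Equiv.Perm (Fin n))} {R : Subgroup (Equiv.Perm (Fin n))}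
    {C : SCC n h} (hC : UConsistent (prodSubgroup Z R) C) :
    Z ≤ equivarianceSubgroup C := fun z hz p =>
  (hC p (z.1, z.2, 1) (mem_prodSubgroup.mpr ⟨hz, one_mem R⟩)).1 rfl

theorem UConsistent.reverse_ne {Z : Subgroup (Equiv.Perm (Fin h) × Equiv.Perm (Fin n))}
    {R : Subgroup (Equiv.Perm (Fin n))} {C : SCC n h} (hC : UConsistent (prodSubgroup Z R) C)
    (hR : rho0 n ∈ R) {p : Profile n h} {x : Fin n} (hx : C p = {x}) :
    C (gact (1, 1, rho0 n) p) ≠ C p := by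
  simpa using (hC p (1, 1, rho0 n) (mem_prodSubgroup.mpr ⟨one_mem Z, hR⟩)).2 rfl x hx

theorem UConsistent.sup_prodSubgroup
    {Z₁ Z₂ : Subgroup (Equiv.Perm (Fin h) × Equiv.Perm (Fin n))}
    {R₁ R₂ : Subgroup (Equiv.Perm (Fin n))} (hR₁ : R₁ ≤ OmegaGrp n) (hR₂ : R₂ ≤ OmegaGrp n)
    {C : SCC n h} (h₁ : UConsistent (prodSubgroup Z₁ R₁) C)
    (h₂ : UConsistent (prodSubgroup Z₂ R₂) C) :
    UConsistent (prodSubgroup Z₁ R₁ ⊔ prodSubgroup Z₂ R₂) C := by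
  intro p g hg
  obtain ⟨hZ, hR⟩ := mem_prodSubgroup.mp (sup_prodSubgroup_le Z₁ Z₂ R₁ R₂ hg)
  have hequiv : (g.1, g.2.1) ∈ equivarianceSubgroup C :=
    sup_le h₁.le_equivarianceSubgroup h₂.le_equivarianceSubgroup hZ
  rw [gact_eq_gact_gact, hequiv]
  refine ⟨fun hρ => by rw [hρ, gact_one], fun hρ x hx himage => ?_⟩
  rw [hρ] at hR himage
  have hrev := Set.image_injective.mpr g.2.1.injective himage
  rcases Subgroup.mem_or_mem_of_mem_sup_of_le_zpowers (rho0_sq n) hR₁ hR₂ hR with hρ₁ | hρ₂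
  · exact h₁.reverse_ne hρ₁ hx hrev
  · exact h₂.reverse_ne hρ₂ hx hrev

theorem uConsistent_and_iff_sup_prodSubgroup
    {Z₁ Z₂ : Subgroup (Equiv.Perm (Fin h) × Equiv.Perm (Fin n))}
    {R₁ R₂ : Subgroup (Equiv.Perm (Fin n))} (hR₁ : R₁ ≤ OmegaGrp n) (hR₂ : R₂ ≤ OmegaGrp n)
    {C : SCC n h} :
    (UConsistent (prodSubgroup Z₁ R₁) C ∧ UConsistent (prodSubgroup Z₂ R₂) C) ↔
      UConsistent (prodSubgroup Z₁ R₁ ⊔ prodSubgroup Z₂ R₂) C :=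
  ⟨fun ⟨h₁, h₂⟩ => h₁.sup_prodSubgroup hR₁ hR₂ h₂,
    fun h => ⟨h.mono le_sup_left, h.mono le_sup_right⟩⟩

end Consistency

theorem statement7_general {n h : ℕ}
    (Z1 Z2 : Subgroup (Equiv.Perm (Fin h) × Equiv.Perm (Fin n)))
    (R1 R2 : Subgroup (Equiv.Perm (Fin n)))
    (hR1 : R1 ≤ OmegaGrp n) (hR2 : R2 ≤ OmegaGrp n) (C : SCC n h) :
    ((UConsistent (prodSubgroup Z1 R1) C ∧ UConsistent (prodSubgroup Z2 R2) C) ↔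
      UConsistent (prodSubgroup Z1 R1 ⊔ prodSubgroup Z2 R2) C) ∧
    (Resolute C →
      ((UConsistent (prodSubgroup Z1 R1) C ∧ UConsistent (prodSubgroup Z2 R2) C) ↔
        UConsistent (prodSubgroup Z1 R1 ⊔ prodSubgroup Z2 R2) C)) :=
  have key := uConsistent_and_iff_sup_prodSubgroup hR1 hR2 (C := C)
  ⟨key, fun _ => key⟩

/-- Proposition `U,V-corr`: for `U_i = Z_i × R_i` with `Z_i ≤ S_h × S_n`
and `R_i ≤ Ω`, a scc is both `U_1`-consistent and `U_2`-consistent iff it is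
`⟨U_1, U_2⟩`-consistent (the join `U_1 ⊔ U_2` is the subgroup generated by `U_1 ∪ U_2`);
in particular the same holds for resolute sccs. -/
theorem statement7 {n h : ℕ} (hh : 2 ≤ h) (hn : 2 ≤ n)
    (Z1 Z2 : Subgroup (Equiv.Perm (Fin h) × Equiv.Perm (Fin n)))
    (R1 R2 : Subgroup (Equiv.Perm (Fin n)))
    (hR1 : R1 ≤ OmegaGrp n) (hR2 : R2 ≤ OmegaGrp n) (C : SCC n h) :
    ((UConsistent (prodSubgroup Z1 R1) C ∧ UConsistent (prodSubgroup Z2 R2) C) ↔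
      UConsistent (prodSubgroup Z1 R1 ⊔ prodSubgroup Z2 R2) C) ∧
    (Resolute C →
      ((UConsistent (prodSubgroup Z1 R1) C ∧ UConsistent (prodSubgroup Z2 R2) C) ↔
        UConsistent (prodSubgroup Z1 R1 ⊔ prodSubgroup Z2 R2) C)) :=
  statement7_general Z1 Z2 R1 R2 hR1 hR2 C
end

section
/- Let U be a subgroup of G not contained in S_h × S_n × {id}, and let C and C' be U-consistent social choice correspondences. Suppose there exist a system of representatives (p^j)_{j ∈ P^U} of the U-orbits of P and an element (φ_*, ψ_*, ρ_0) ∈ U such that C(p^j) = C'(p^j) for every U-orbit j, and C(p^{j (φ_*,ψ_*,ρ_0)}) = C'(p^{j (φ_*,ψ_*,ρ_0)}) for every j ∈ P_1^U. Then C = C'. -/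
/-- `p` and `q` lie in the same `U`-orbit. -/
def SameOrbit {n h : ℕ} (U : Subgroup (Amb n h)) (p q : Profile n h) : Prop :=
  ∃ g ∈ U, gact g p = q

/-- `S` is a system of representatives of the `U`-orbits: every profile is in the
orbit of exactly one element of `S`. -/
def IsRepSystem {n h : ℕ} (U : Subgroup (Amb n h)) (S : Set (Profile n h)) : Prop :=
  ∀ p : Profile n h, ∃! r, r ∈ S ∧ SameOrbit U r p

/-- The stabilizer of `r` in `U` is contained in `S_h × S_n × {id}` (i.e. the
`U`-orbit of `r` belongs to `P₁ᵁ`). -/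
def StabIn1 {n h : ℕ} (U : Subgroup (Amb n h)) (r : Profile n h) : Prop :=
  ∀ g ∈ U, gact g r = r → g.2.2 = 1

lemma rho0_mul_self (n : ℕ) : rho0 n * rho0 n = 1 := by
  ext x
  simp [rho0]

lemma eq_one_or_eq_rho0_of_mem_OmegaGrp {n : ℕ} {ρ : Equiv.Perm (Fin n)}
    (hρ : ρ ∈ OmegaGrp n) : ρ = 1 ∨ ρ = rho0 n := by
  obtain ⟨k, rfl⟩ := Subgroup.mem_zpowers_iff.mp hρ
  rcases Int.even_or_odd' k with ⟨m, rfl | rfl⟩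
  · left
    rw [zpow_mul, zpow_two, rho0_mul_self, one_zpow]
  · right
    rw [zpow_add, zpow_mul, zpow_two, rho0_mul_self, one_zpow, one_mul, zpow_one]

lemma snd_snd_eq_one_or_eq_rho0_of_mem_bigG {n h : ℕ} {g : Amb n h} (hg : g ∈ bigG n h) :
    g.2.2 = 1 ∨ g.2.2 = rho0 n :=
  eq_one_or_eq_rho0_of_mem_OmegaGrp (Subgroup.mem_prod.mp (Subgroup.mem_prod.mp hg).2).2

/- `gact` acts on the right through the third component, so it is multiplicative only when
those commute; here the first factor has trivial third component. -/
lemma gact_eq_gact_mul_inv_gact {n h : ℕ} {g u : Amb n h} (hgu : g.2.2 = u.2.2)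
    (p : Profile n h) : gact g p = gact (g * u⁻¹) (gact u p) := by
  funext i
  simp [gact, hgu, mul_assoc]

namespace UConsistent

variable {n h : ℕ} {U : Subgroup (Amb n h)} {C C' : SCC n h}

lemma eq_gact_of_eq (hC : UConsistent U C) (hC' : UConsistent U C') {q : Profile n h}
    (hq : C q = C' q) {k : Amb n h} (hk : k ∈ U) (hk3 : k.2.2 = 1) :
    C (gact k q) = C' (gact k q) := by
  rw [(hC q k hk).1 hk3, (hC' q k hk).1 hk3, hq]

lemma eq_gact_of_eq_gact (hC : UConsistent U C) (hC' : UConsistent U C')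
    {r : Profile n h} {u g : Amb n h} (hu : u ∈ U) (hg : g ∈ U) (hgu : g.2.2 = u.2.2)
    (hr : C (gact u r) = C' (gact u r)) : C (gact g r) = C' (gact g r) := by
  rw [gact_eq_gact_mul_inv_gact hgu]
  exact eq_gact_of_eq hC hC' hr (mul_mem hg (inv_mem hu)) (by simp [hgu])

end UConsistent

theorem statement9_general {n h : ℕ}
    (U : Subgroup (Amb n h)) (hUG : U ≤ bigG n h)
    (C C' : SCC n h) (hC : UConsistent U C) (hC' : UConsistent U C')
    (S : Set (Profile n h)) (hS : IsRepSystem U S)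
    (gs : Amb n h) (hgs : gs ∈ U) (hgs3 : gs.2.2 = rho0 n)
    (heq : ∀ r ∈ S, C r = C' r)
    (heq1 : ∀ r ∈ S, StabIn1 U r → C (gact gs r) = C' (gact gs r)) :
    C = C' := by
  funext p
  obtain ⟨r, ⟨hrS, g, hgU, rfl⟩, -⟩ := hS p
  rcases snd_snd_eq_one_or_eq_rho0_of_mem_bigG (hUG hgU) with hg1 | hg0
  · exact hC.eq_gact_of_eq hC' (heq r hrS) hgU hg1
  · by_cases hst : StabIn1 U r
    · exact hC.eq_gact_of_eq_gact hC' hgs hgU (hg0.trans hgs3.symm) (heq1 r hrS hst)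
    · -- a stabiliser element of `r` reversing preferences serves as `gs`
      obtain ⟨u, huU, hur, hu1⟩ : ∃ u ∈ U, gact u r = r ∧ u.2.2 ≠ 1 := by
        simpa [StabIn1] using hst
      have hu0 := (snd_snd_eq_one_or_eq_rho0_of_mem_bigG (hUG huU)).resolve_left hu1
      refine hC.eq_gact_of_eq_gact hC' huU hgU (hg0.trans hu0.symm) ?_
      rw [hur]
      exact heq r hrS

/-- Proposition `rappresentanti2`: two `U`-consistent sccs that agree on
a system of representatives of the `U`-orbits, and on `p^{j (φ*,ψ*,ρ₀)}` for every
orbit `j ∈ P₁ᵁ`, coincide, when `U` is not contained in `S_h × S_n × {id}`. -/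
theorem statement9 {n h : ℕ} (hh : 2 ≤ h) (hn : 2 ≤ n)
    (U : Subgroup (Amb n h)) (hUG : U ≤ bigG n h)
    (hU2 : ∃ g ∈ U, g.2.2 ≠ 1)
    (C C' : SCC n h) (hC : UConsistent U C) (hC' : UConsistent U C')
    (S : Set (Profile n h)) (hS : IsRepSystem U S)
    (gs : Amb n h) (hgs : gs ∈ U) (hgs3 : gs.2.2 = rho0 n)
    (heq : ∀ r ∈ S, C r = C' r)
    (heq1 : ∀ r ∈ S, StabIn1 U r → C (gact gs r) = C' (gact gs r)) :
    C = C' :=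
  statement9_general U hUG C C' hC hC' S hS gs hgs hgs3 heq heq1
end
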